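/- arXiv:2204.13505 — 5 statements merged into one kernel-verified Lean document; each statement's English description precedes it below -/
import Mathlib

section
/- Let μ₁, μ₂ ∈ ℝ, σ > 0, A > 0, and set λ = A(μ₁² + μ₂²) and a = Aσ². Let ν be the product of the real Gaussian measure with mean μ₁ and variance σ²/2 and the real Gaussian measure with mean μ₂ and variance σ²/2 on ℝ². Then the pushforward of ν under the map (u, v) ↦ A(u² + v²) is absolutely continuous with respect to Lebesgue measure on ℝ with density x ↦ (1/a) exp(−(x + λ)/a) I₀(2√(λx)/a) · 1_{x ≥ 0}. -/
open Real MeasureTheory ProbabilityTheory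

/-- Modified Bessel function of the first kind of order zero (integral representation). -/
noncomputable def besselI0 (z : ℝ) : ℝ :=
  (1 / Real.pi) * ∫ t in (0:ℝ)..Real.pi, Real.exp (z * Real.cos t)

open Set ENNReal
open scoped ENNReal NNReal

theorem prod_withDensity' (f g : ℝ → ℝ≥0∞) (hf : Measurable f) (hg : Measurable g) :
    (volume.withDensity f).prod (volume.withDensity g)
      = (volume.prod volume).withDensity (fun p => f p.1 * g p.2) := by
  ext s hs
  have hm : Measurable (s.indicator (fun p : ℝ × ℝ => f p.1 * g p.2)) :=
    ((hf.comp measurable_fst).mul (hg.comp measurable_snd)).indicator hs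
  calc (volume.withDensity f).prod (volume.withDensity g) s
      = ∫⁻ x, (volume.withDensity g) (Prod.mk x ⁻¹' s) ∂(volume.withDensity f) :=
        Measure.prod_apply hs
    _ = ∫⁻ x, f x * (volume.withDensity g) (Prod.mk x ⁻¹' s) := by
        rw [lintegral_withDensity_eq_lintegral_mul _ hf
          (measurable_measure_prodMk_left hs)]
        rfl
    _ = ∫⁻ x, ∫⁻ y, s.indicator (fun p : ℝ × ℝ => f p.1 * g p.2) (x, y) := by
        congr 1 with x
        rw [withDensity_apply _ (measurable_prodMk_left hs),
          ← lintegral_indicator (measurable_prodMk_left hs) g,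
          ← lintegral_const_mul _ (hg.indicator (measurable_prodMk_left hs))]
        congr 1 with y
        by_cases h : (x, y) ∈ s <;>
          simp [h, Set.indicator_of_mem, Set.indicator_of_notMem, Set.mem_preimage]
    _ = ∫⁻ p, s.indicator (fun p : ℝ × ℝ => f p.1 * g p.2) p ∂(volume.prod volume) :=
        (lintegral_prod _ hm.aemeasurable).symm
    _ = (volume.prod volume).withDensity (fun p => f p.1 * g p.2) s := by
        rw [withDensity_apply _ hs, lintegral_indicator hs]

theorem lintegral_comp_polarCoord_symm' (f : ℝ × ℝ → ℝ≥0∞) :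
    (∫⁻ p in polarCoord.target, ENNReal.ofReal p.1 * f (polarCoord.symm p))
      = ∫⁻ p, f p := by
  set B : ℝ × ℝ → ℝ × ℝ →L[ℝ] ℝ × ℝ := fun p =>
    LinearMap.toContinuousLinearMap (Matrix.toLin (Module.Basis.finTwoProd ℝ) (Module.Basis.finTwoProd ℝ)
      !![Real.cos p.2, -p.1 * Real.sin p.2; Real.sin p.2, p.1 * Real.cos p.2])
  have A : ∀ p ∈ polarCoord.target, HasFDerivWithinAt polarCoord.symm (B p)
      polarCoord.target p := fun p _ =>
    (hasFDerivAt_polarCoord_symm p).hasFDerivWithinAt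
  have B_det : ∀ p, (B p).det = p.1 := by
    intro p
    conv_rhs => rw [← one_mul p.1, ← cos_sq_add_sin_sq p.2]
    simp only [B, neg_mul, LinearMap.det_toContinuousLinearMap, LinearMap.det_toLin,
      Matrix.det_fin_two_of, sub_neg_eq_add]
    ring
  have hinj : Set.InjOn polarCoord.symm polarCoord.target := polarCoord.symm.injOn
  have himg : polarCoord.symm '' polarCoord.target = polarCoord.source :=
    polarCoord.symm.image_source_eq_target
  calc ∫⁻ p in polarCoord.target, ENNReal.ofReal p.1 * f (polarCoord.symm p)
      = ∫⁻ p in polarCoord.target, ENNReal.ofReal |(B p).det| * f (polarCoord.symm p) := by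
        refine setLIntegral_congr_fun_ae polarCoord.open_target.measurableSet
          (ae_of_all _ fun p hp => ?_)
        rw [B_det, abs_of_pos]
        exact hp.1
    _ = ∫⁻ p in polarCoord.symm '' polarCoord.target, f p :=
        (lintegral_image_eq_lintegral_abs_det_fderiv_mul volume
          polarCoord.open_target.measurableSet A hinj f).symm
    _ = ∫⁻ p in polarCoord.source, f p := by rw [himg]
    _ = ∫⁻ p, f p :=
        (setLIntegral_congr polarCoord_source_ae_eq_univ).trans (setLIntegral_univ f)

theorem besselI0_nonneg (z : ℝ) : 0 ≤ besselI0 z :=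
  mul_nonneg (by positivity) (intervalIntegral.integral_nonneg Real.pi_nonneg
    (fun u _ => (Real.exp_pos _).le))

theorem radial_change (A : ℝ) (hA : 0 < A) (H : ℝ → ℝ≥0∞) :
    ∫⁻ x in Set.Ioi (0:ℝ), H x
      = ∫⁻ r in Set.Ioi (0:ℝ), ENNReal.ofReal (2*A*r) * H (A*r^2) := by
  have himg : (fun r : ℝ => A*r^2) '' Set.Ioi 0 = Set.Ioi 0 := by
    ext x
    constructor
    · rintro ⟨r, hr, rfl⟩
      have : (0:ℝ) < r := hr
      exact mul_pos hA (by positivity)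
    · intro hx
      have hx' : (0:ℝ) < x := hx
      refine ⟨Real.sqrt (x/A), ?_, ?_⟩
      · have : (0:ℝ) < x / A := div_pos hx' hA
        exact Real.sqrt_pos.mpr this
      · show A * Real.sqrt (x/A) ^ 2 = x
        rw [Real.sq_sqrt (le_of_lt (div_pos hx' hA))]
        field_simp
  have hderiv : ∀ r ∈ Set.Ioi (0:ℝ),
      HasDerivWithinAt (fun r : ℝ => A*r^2) (2*A*r) (Set.Ioi 0) r := by
    intro r _
    have h1 : HasDerivAt (fun r : ℝ => A*r^2) (A * (↑2 * r ^ (2-1))) r :=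
      (hasDerivAt_pow 2 r).const_mul A
    have h2 : A * (↑(2:ℕ) * r ^ (2-1)) = 2*A*r := by push_cast; ring
    exact (h2 ▸ h1).hasDerivWithinAt
  have hinj : Set.InjOn (fun r : ℝ => A*r^2) (Set.Ioi 0) := by
    intro x hx y hy h
    have h' : x^2 = y^2 := mul_left_cancel₀ hA.ne' h
    have hx' : (0:ℝ) ≤ x := le_of_lt hx
    have hy' : (0:ℝ) ≤ y := le_of_lt hy
    calc x = Real.sqrt (x^2) := (Real.sqrt_sq hx').symm
      _ = Real.sqrt (y^2) := by rw [h']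
      _ = y := Real.sqrt_sq hy'
  conv_lhs => rw [← himg]
  rw [lintegral_image_eq_lintegral_abs_det_fderiv_mul volume measurableSet_Ioi
    (fun r hr => (hderiv r hr).hasFDerivWithinAt) hinj H]
  refine setLIntegral_congr_fun_ae measurableSet_Ioi (ae_of_all _ fun r hr => ?_)
  rw [ContinuousLinearMap.det_toSpanSingleton, abs_of_nonneg
    (by have : (0:ℝ) < r := hr; positivity : (0:ℝ) ≤ 2*A*r)]

theorem angular_integral (b c : ℝ) :
    ∫ θ in (-Real.pi)..Real.pi, Real.exp (b * Real.cos θ + c * Real.sin θ)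
      = 2 * Real.pi * besselI0 (Real.sqrt (b ^ 2 + c ^ 2)) := by
  set z : ℂ := ⟨b, c⟩ with hz
  set ρ : ℝ := Real.sqrt (b ^ 2 + c ^ 2) with hρ
  set φ : ℝ := Complex.arg z with hφ
  have habs : ‖z‖ = ρ := by
    rw [Complex.norm_def, Complex.normSq_mk]; ring_nf; rfl
  have hb : b = ρ * Real.cos φ := by
    have := Complex.norm_mul_cos_add_sin_mul_I z
    have hre := congrArg Complex.re this
    simp [habs] at hre
    exact hre.symm
  have hc : c = ρ * Real.sin φ := by
    have := Complex.norm_mul_cos_add_sin_mul_I z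
    have him := congrArg Complex.im this
    simp [habs] at him
    exact him.symm
  have key : ∀ θ : ℝ, b * Real.cos θ + c * Real.sin θ = ρ * Real.cos (θ - φ) := by
    intro θ
    rw [hb, hc, Real.cos_sub]; ring
  simp_rw [key]
  have hper : Function.Periodic (fun t => Real.exp (ρ * Real.cos t)) (2 * Real.pi) :=
    fun t => by simp [Real.cos_add_two_pi]
  have h1 : ∫ θ in (-Real.pi)..Real.pi, Real.exp (ρ * Real.cos (θ - φ))
      = ∫ t in (-Real.pi - φ)..(Real.pi - φ), Real.exp (ρ * Real.cos t) := by
    rw [intervalIntegral.integral_comp_sub_right (fun t => Real.exp (ρ * Real.cos t)) φ]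
  have h2 : ∫ t in (-Real.pi - φ)..(Real.pi - φ), Real.exp (ρ * Real.cos t)
      = ∫ t in (-Real.pi)..Real.pi, Real.exp (ρ * Real.cos t) := by
    have := hper.intervalIntegral_add_eq (-Real.pi - φ) (-Real.pi)
    have e1 : -Real.pi - φ + 2 * Real.pi = Real.pi - φ := by ring
    have e2 : -Real.pi + 2 * Real.pi = Real.pi := by ring
    rwa [e1, e2] at this
  have hint : ∀ a b : ℝ, IntervalIntegrable (fun t => Real.exp (ρ * Real.cos t)) volume a b :=
    fun a b => ((Real.continuous_exp.comp (continuous_const.mul Real.continuous_cos))).intervalIntegrable a b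
  have h3 : ∫ t in (-Real.pi)..Real.pi, Real.exp (ρ * Real.cos t)
      = 2 * ∫ t in (0:ℝ)..Real.pi, Real.exp (ρ * Real.cos t) := by
    have hsplit := intervalIntegral.integral_add_adjacent_intervals
      (hint (-Real.pi) 0) (hint 0 Real.pi)
    have hneg : ∫ t in (-Real.pi)..(0:ℝ), Real.exp (ρ * Real.cos t)
        = ∫ t in (0:ℝ)..Real.pi, Real.exp (ρ * Real.cos t) := by
      have h := intervalIntegral.integral_comp_neg (a := 0) (b := Real.pi)
        (fun t => Real.exp (ρ * Real.cos t))
      simp only [Real.cos_neg, neg_zero] at h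
      exact h.symm
    rw [← hsplit, hneg]; ring
  rw [h1, h2, h3, besselI0]
  have hπ : Real.pi ≠ 0 := Real.pi_ne_zero
  field_simp

theorem inner_theta (b c C : ℝ) (hC : 0 ≤ C) :
    ∫⁻ θ in Set.Ioo (-Real.pi) Real.pi,
        ENNReal.ofReal (C * Real.exp (b * Real.cos θ + c * Real.sin θ))
      = ENNReal.ofReal (C * (2 * Real.pi * besselI0 (Real.sqrt (b^2+c^2)))) := by
  have hcont : Continuous fun θ : ℝ => C * Real.exp (b * Real.cos θ + c * Real.sin θ) := by
    fun_prop
  have hint : IntegrableOn (fun θ : ℝ => C * Real.exp (b * Real.cos θ + c * Real.sin θ))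
      (Set.Ioo (-Real.pi) Real.pi) volume :=
    (hcont.integrableOn_Icc).mono_set Set.Ioo_subset_Icc_self
  rw [← ofReal_integral_eq_lintegral_ofReal hint
    (ae_of_all _ fun θ => mul_nonneg hC (Real.exp_pos _).le)]
  congr 1
  rw [← MeasureTheory.integral_Ioc_eq_integral_Ioo,
    ← intervalIntegral.integral_of_le (by linarith [Real.pi_pos] : -Real.pi ≤ Real.pi),
    intervalIntegral.integral_const_mul, angular_integral]

/-- The power `A(u² + v²)` of a complex Gaussian field `CN(μ₁ + iμ₂, σ²)` (i.e. a pair of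
independent real Gaussians with means `μ₁, μ₂` and variance `σ²/2`) has the degree-2
noncentral chi-squared density with noncentrality `λ = A(μ₁² + μ₂²)` and scale `a = Aσ²`. -/
theorem power_sensor_noncentral_chi_sq (μ₁ μ₂ σ A lam a : ℝ) (hσ : 0 < σ) (hA : 0 < A)
    (hlam : lam = A * (μ₁^2 + μ₂^2)) (ha : a = A * σ^2) :
    MeasureTheory.Measure.map (fun p : ℝ × ℝ => A * (p.1^2 + p.2^2))
        ((gaussianReal μ₁ (Real.toNNReal (σ^2 / 2))).prod
          (gaussianReal μ₂ (Real.toNNReal (σ^2 / 2))))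
      = MeasureTheory.volume.withDensity (fun x => ENNReal.ofReal
          (Set.indicator (Set.Ici (0:ℝ))
            (fun x => (1 / a) * Real.exp (-(x + lam) / a)
              * besselI0 (2 * Real.sqrt (lam * x) / a)) x)) := by
  have hπ := Real.pi_pos
  have hσ2 : (0:ℝ) < σ^2/2 := by positivity
  set v : ℝ≥0 := Real.toNNReal (σ^2/2) with hvdef
  have hvne : v ≠ 0 := (Real.toNNReal_pos.mpr hσ2).ne'
  have hvco : ((v:ℝ)) = σ^2/2 := Real.coe_toNNReal _ hσ2.le
  have hapos : 0 < a := by rw [ha]; positivity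
  set f : ℝ × ℝ → ℝ := fun p => A * (p.1^2 + p.2^2) with hfdef
  have hfm : Measurable f :=
    ((measurable_fst.pow_const 2).add (measurable_snd.pow_const 2)).const_mul A
  set G : ℝ × ℝ → ℝ := fun p => gaussianPDFReal μ₁ v p.1 * gaussianPDFReal μ₂ v p.2 with hGdef
  have hGm : Measurable G := ((measurable_gaussianPDFReal μ₁ v).comp measurable_fst).mul
    ((measurable_gaussianPDFReal μ₂ v).comp measurable_snd)
  set dens0 : ℝ → ℝ := fun x => (1 / a) * Real.exp (-(x + lam) / a)
    * besselI0 (2 * Real.sqrt (lam * x) / a) with hd0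
  rw [gaussianReal_of_var_ne_zero _ hvne, gaussianReal_of_var_ne_zero _ hvne,
    prod_withDensity' _ _ (measurable_gaussianPDF _ _) (measurable_gaussianPDF _ _)]
  ext s hs
  rw [Measure.map_apply hfm hs, withDensity_apply _ (hfm hs), withDensity_apply _ hs]
  set F : ℝ × ℝ → ℝ≥0∞ := fun p => s.indicator 1 (f p) * ENNReal.ofReal (G p) with hFdef
  have hFm : Measurable F :=
    ((measurable_one.indicator hs).comp hfm).mul hGm.ennreal_ofReal
  -- LHS chain
  have hLHS : ∫⁻ p in f ⁻¹' s, gaussianPDF μ₁ v p.1 * gaussianPDF μ₂ v p.2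
        ∂((volume : Measure ℝ).prod volume)
      = ∫⁻ r in Set.Ioi (0:ℝ), ∫⁻ θ in Set.Ioo (-Real.pi) Real.pi,
          ENNReal.ofReal r * F (r * Real.cos θ, r * Real.sin θ) := by
    calc ∫⁻ p in f ⁻¹' s, gaussianPDF μ₁ v p.1 * gaussianPDF μ₂ v p.2
          ∂((volume : Measure ℝ).prod volume)
        = ∫⁻ p in f ⁻¹' s, ENNReal.ofReal (G p) ∂((volume : Measure ℝ).prod volume) := by
          refine lintegral_congr fun p => ?_
          rw [hGdef, gaussianPDF, gaussianPDF,
            ← ENNReal.ofReal_mul (gaussianPDFReal_nonneg _ _ _)]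
      _ = ∫⁻ p, F p ∂((volume : Measure ℝ).prod volume) := by
          rw [← lintegral_indicator (hfm hs)]
          refine lintegral_congr fun p => ?_
          by_cases hp : f p ∈ s
          · simp [hFdef, Set.indicator_of_mem, hp, Set.mem_preimage]
          · simp [hFdef, Set.indicator_of_notMem, hp, Set.mem_preimage]
      _ = ∫⁻ p, F p := by rw [← Measure.volume_eq_prod]
      _ = ∫⁻ q in polarCoord.target, ENNReal.ofReal q.1 * F (polarCoord.symm q) :=
          (lintegral_comp_polarCoord_symm' F).symm
      _ = ∫⁻ q in Set.Ioi (0:ℝ) ×ˢ Set.Ioo (-Real.pi) Real.pi,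
            ENNReal.ofReal q.1 * F (q.1 * Real.cos q.2, q.1 * Real.sin q.2) := rfl
      _ = ∫⁻ r in Set.Ioi (0:ℝ), ∫⁻ θ in Set.Ioo (-Real.pi) Real.pi,
            ENNReal.ofReal r * F (r * Real.cos θ, r * Real.sin θ) := by
          rw [Measure.volume_eq_prod, ← Measure.prod_restrict]
          refine lintegral_prod _ ?_
          refine (Measurable.mul ?_ ?_).aemeasurable
          · exact measurable_fst.ennreal_ofReal
          · exact hFm.comp ((measurable_fst.mul measurable_snd.cos).prodMk
              (measurable_fst.mul measurable_snd.sin))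
  -- RHS chain
  have hRHS : ∫⁻ x in s, ENNReal.ofReal ((Set.Ici (0:ℝ)).indicator dens0 x)
      = ∫⁻ r in Set.Ioi (0:ℝ), ENNReal.ofReal (2*A*r)
          * (s.indicator 1 (A*r^2) * ENNReal.ofReal (dens0 (A*r^2))) := by
    calc ∫⁻ x in s, ENNReal.ofReal ((Set.Ici (0:ℝ)).indicator dens0 x)
        = ∫⁻ x, (s ∩ Set.Ici 0).indicator (fun x => ENNReal.ofReal (dens0 x)) x := by
          rw [← lintegral_indicator hs]
          refine lintegral_congr fun x => ?_
          by_cases hxs : x ∈ s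
          · by_cases hx0 : x ∈ Set.Ici (0:ℝ) <;>
              simp [Set.indicator, hxs, hx0]
          · simp [Set.indicator, hxs]
      _ = ∫⁻ x, (s ∩ Set.Ioi 0).indicator (fun x => ENNReal.ofReal (dens0 x)) x := by
          refine lintegral_congr_ae ?_
          have h0 : ∀ᵐ x : ℝ ∂volume, x ≠ 0 := by
            rw [ae_iff]
            have : {x : ℝ | ¬ x ≠ 0} = {0} := by ext x; simp
            rw [this]
            exact measure_singleton 0
          filter_upwards [h0] with x hx
          have hiff : x ∈ Set.Ici (0:ℝ) ↔ x ∈ Set.Ioi (0:ℝ) := by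
            simp only [Set.mem_Ici, Set.mem_Ioi]
            exact ⟨fun h => lt_of_le_of_ne h (Ne.symm hx), le_of_lt⟩
          by_cases hxs : x ∈ s
          · by_cases hx0 : x ∈ Set.Ioi (0:ℝ)
            · simp [Set.indicator, hxs, hx0, hiff.mpr hx0]
            · simp [Set.indicator, hxs, hx0, hiff]
          · simp [Set.indicator, hxs]
      _ = ∫⁻ x in Set.Ioi (0:ℝ), s.indicator 1 x * ENNReal.ofReal (dens0 x) := by
          rw [← lintegral_indicator measurableSet_Ioi]
          refine lintegral_congr fun x => ?_
          by_cases hx0 : x ∈ Set.Ioi (0:ℝ) <;> by_cases hxs : x ∈ s <;>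
            simp [Set.indicator, hx0, hxs]
      _ = ∫⁻ r in Set.Ioi (0:ℝ), ENNReal.ofReal (2*A*r)
            * (s.indicator 1 (A*r^2) * ENNReal.ofReal (dens0 (A*r^2))) := by
          exact radial_change A hA _
  rw [hLHS, hRHS]
  -- match the two radial integrands for r > 0
  refine setLIntegral_congr_fun_ae measurableSet_Ioi (ae_of_all _ fun r hr => ?_)
  have hrpos : (0:ℝ) < r := hr
  set br : ℝ := 2*r*μ₁/σ^2 with hbr
  set cr : ℝ := 2*r*μ₂/σ^2 with hcr
  set Cr : ℝ := (π*σ^2)⁻¹ * Real.exp (-(r^2+(μ₁^2+μ₂^2))/σ^2) with hCr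
  have hCrnn : 0 ≤ Cr := by rw [hCr]; positivity
  have hf2 : ∀ θ : ℝ, f (r * Real.cos θ, r * Real.sin θ) = A * r^2 := by
    intro θ
    simp only [hfdef]
    have hcs := Real.cos_sq_add_sin_sq θ
    linear_combination A * r^2 * hcs
  have hG2 : ∀ θ : ℝ, G (r * Real.cos θ, r * Real.sin θ)
      = Cr * Real.exp (br * Real.cos θ + cr * Real.sin θ) := by
    intro θ
    simp only [hGdef, gaussianPDFReal, hvco, hCr, hbr, hcr]
    rw [show 2*π*(σ^2/2) = π*σ^2 by ring]
    rw [show (2:ℝ)*(σ^2/2) = σ^2 by ring]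
    rw [mul_mul_mul_comm, ← mul_inv, Real.mul_self_sqrt (by positivity), ← Real.exp_add]
    conv_rhs => rw [mul_assoc, ← Real.exp_add]
    congr 1
    rw [Real.exp_eq_exp]
    have hcs := Real.cos_sq_add_sin_sq θ
    have hσ2ne : (σ:ℝ)^2 ≠ 0 := by positivity
    field_simp
    linear_combination (-r^2) * hcs
  have hind_ne_top : s.indicator (1 : ℝ → ℝ≥0∞) (A*r^2) ≠ ⊤ := by
    by_cases h : A*r^2 ∈ s <;> simp [Set.indicator, h]
  have hsq : Real.sqrt (br^2 + cr^2) = 2 * Real.sqrt (lam * (A*r^2)) / a := by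
    have h1 : br^2 + cr^2 = (2*r/σ^2)^2 * (μ₁^2+μ₂^2) := by rw [hbr, hcr]; ring
    have h2 : lam * (A*r^2) = (A*r)^2 * (μ₁^2+μ₂^2) := by rw [hlam]; ring
    rw [h1, h2, Real.sqrt_mul (sq_nonneg _), Real.sqrt_mul (sq_nonneg _),
      Real.sqrt_sq (by positivity : (0:ℝ) ≤ 2*r/σ^2),
      Real.sqrt_sq (by positivity : (0:ℝ) ≤ A*r), ha]
    field_simp
  calc ∫⁻ θ in Set.Ioo (-Real.pi) Real.pi,
        ENNReal.ofReal r * F (r * Real.cos θ, r * Real.sin θ)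
      = ∫⁻ θ in Set.Ioo (-Real.pi) Real.pi,
          (ENNReal.ofReal r * s.indicator 1 (A*r^2))
            * ENNReal.ofReal (Cr * Real.exp (br * Real.cos θ + cr * Real.sin θ)) := by
        refine setLIntegral_congr_fun_ae measurableSet_Ioo (ae_of_all _ fun θ _ => ?_)
        simp only [hFdef]
        rw [hf2 θ, hG2 θ]
        exact (mul_assoc _ _ _).symm
    _ = (ENNReal.ofReal r * s.indicator 1 (A*r^2))
          * ∫⁻ θ in Set.Ioo (-Real.pi) Real.pi,
              ENNReal.ofReal (Cr * Real.exp (br * Real.cos θ + cr * Real.sin θ)) :=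
        lintegral_const_mul' _ _ (ENNReal.mul_ne_top ENNReal.ofReal_ne_top hind_ne_top)
    _ = (ENNReal.ofReal r * s.indicator 1 (A*r^2))
          * ENNReal.ofReal (Cr * (2 * Real.pi * besselI0 (Real.sqrt (br^2+cr^2)))) := by
        rw [inner_theta br cr Cr hCrnn]
    _ = ENNReal.ofReal (2*A*r)
          * (s.indicator 1 (A*r^2) * ENNReal.ofReal (dens0 (A*r^2))) := by
        rw [hsq]
        by_cases hmem : A*r^2 ∈ s
        · simp only [Set.indicator_of_mem hmem, Pi.one_apply, mul_one, one_mul]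
          rw [← ENNReal.ofReal_mul hrpos.le,
            ← ENNReal.ofReal_mul (by positivity : (0:ℝ) ≤ 2*A*r)]
          congr 1
          simp only [hd0]
          have hexp : Real.exp (-(A*r^2 + lam)/a) = Real.exp (-(r^2+(μ₁^2+μ₂^2))/σ^2) := by
            rw [hlam, ha]
            congr 1
            field_simp
          rw [hexp, hCr, ha]
          field_simp
        · simp [Set.indicator_of_notMem hmem]
end

section
/- For every a > 0 and every λ > 0, ∫₀^∞ (√x / a) · exp(−(x + λ)/a) · I₁(2√(λx)/a) dx = √λ; equivalently, if P has the degree-2 noncentral chi-squared density with noncentrality parameter λ and scale a, then E[ R(2√(λP)/a) · √P ] = √λ. -/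
open Real MeasureTheory

open Set


lemma wallis_prod (m : ℕ) :
    ∏ i ∈ Finset.range m, (2*(i:ℝ)+1)/(2*i+2)
      = (2*m).factorial / ((m.factorial : ℝ) * m.factorial * 4^m) := by
  induction m with
  | zero => simp
  | succ k ih =>
    rw [Finset.prod_range_succ, ih]
    have h1 : ((2*(k+1)).factorial : ℝ) = (2*k+2) * ((2*k+1) * (2*k).factorial) := by
      have : 2*(k+1) = (2*k+1) + 1 := by ring
      rw [this, Nat.factorial_succ, Nat.factorial_succ]
      push_cast; ring
    have h2 : ((k+1).factorial : ℝ) = (k+1) * k.factorial := by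
      rw [Nat.factorial_succ]; push_cast; ring
    rw [h1, h2]
    have hk : (k.factorial : ℝ) ≠ 0 := Nat.cast_ne_zero.mpr k.factorial_ne_zero
    have h4 : (4:ℝ)^k ≠ 0 := by positivity
    have hk1 : (k:ℝ)+1 ≠ 0 := by positivity
    field_simp
    ring

lemma cos_pow_odd_integral (m : ℕ) : ∫ t in (0:ℝ)..π, Real.cos t ^ (2*m+1) = 0 := by
  have h := intervalIntegral.integral_comp_sub_left (a := (0:ℝ)) (b := π)
      (fun t => Real.cos t ^ (2*m+1)) π
  simp only [sub_zero, sub_self] at h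
  have h2 : ∀ t, Real.cos (π - t) ^ (2*m+1) = - (Real.cos t ^ (2*m+1)) := by
    intro t
    rw [Real.cos_pi_sub]
    rw [Odd.neg_pow ⟨m, by ring⟩]
  simp only [h2] at h
  rw [intervalIntegral.integral_neg] at h
  linarith

lemma cos_pow_even_integral (m : ℕ) :
    ∫ t in (0:ℝ)..π, Real.cos t ^ (2*m) = π * ∏ i ∈ Finset.range m, (2*(i:ℝ)+1)/(2*i+2) := by
  have L : IntervalIntegrable (fun t => Real.cos t ^ (2*m)) volume 0 (π/2) :=
    (Real.continuous_cos.pow _).intervalIntegrable _ _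
  have R : IntervalIntegrable (fun t => Real.cos t ^ (2*m)) volume (π/2) π :=
    (Real.continuous_cos.pow _).intervalIntegrable _ _
  have hsplit := intervalIntegral.integral_add_adjacent_intervals L R
  have hsym : ∫ t in (π/2:ℝ)..π, Real.cos t ^ (2*m) = ∫ t in (0:ℝ)..(π/2), Real.cos t ^ (2*m) := by
    have h := intervalIntegral.integral_comp_sub_left (a := (0:ℝ)) (b := π/2)
        (fun t => Real.cos t ^ (2*m)) π
    have h2 : ∀ t, Real.cos (π - t) ^ (2*m) = Real.cos t ^ (2*m) := by
      intro t; rw [Real.cos_pi_sub, Even.neg_pow ⟨m, by ring⟩]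
    simp only [h2, sub_zero] at h
    have e : π - π/2 = π/2 := by ring
    rw [e] at h
    exact h.symm
  have hc := EulerSine.integral_cos_pow_eq (2*m)
  rw [← hsplit, hsym, ← two_mul, hc, integral_sin_pow_even]
  ring


lemma integrableOn_pow_exp (n : ℕ) {b : ℝ} (hb : 0 < b) :
    IntegrableOn (fun x : ℝ => x ^ n * Real.exp (-(b*x))) (Set.Ioi 0) := by
  have h0 : IntegrableOn (fun x : ℝ => Real.exp (-x) * x ^ ((n:ℝ) + 1 - 1)) (Set.Ioi 0) :=
    Real.GammaIntegral_convergent (by positivity)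
  have h1 : IntegrableOn (fun x : ℝ => Real.exp (-(b*x)) * (b*x) ^ ((n:ℝ) + 1 - 1))
      (Set.Ioi 0) := by
    have := (integrableOn_Ioi_comp_mul_left_iff
      (fun x : ℝ => Real.exp (-x) * x ^ ((n:ℝ) + 1 - 1)) 0 hb).mpr (by simpa using h0)
    simpa using this
  have h2 := h1.const_mul ((1/b) ^ n)
  apply IntegrableOn.congr_fun h2 ?_ measurableSet_Ioi
  intro x hx
  simp only
  have hx0 : (0:ℝ) < x := hx
  have hbx : (0:ℝ) ≤ b * x := by positivity
  have : (b*x) ^ ((n:ℝ) + 1 - 1) = (b*x) ^ n := by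
    rw [add_sub_cancel_right, Real.rpow_natCast]
  rw [this]
  rw [mul_pow]
  have hbn : (b:ℝ)^n ≠ 0 := by positivity
  field_simp
  ring_nf; rw [← mul_pow, mul_inv_cancel₀ hb.ne', one_pow]

lemma integral_pow_exp (n : ℕ) {b : ℝ} (hb : 0 < b) :
    ∫ x in Set.Ioi (0:ℝ), x ^ n * Real.exp (-(b*x)) = n.factorial / b^(n+1) := by
  have := Real.integral_rpow_mul_exp_neg_mul_Ioi (a := (n:ℝ)+1) (by positivity) hb
  rw [Real.Gamma_nat_eq_factorial] at this
  rw [show ((1:ℝ)/b) ^ ((n:ℝ)+1) = 1/b^(n+1) by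
    rw [show ((n:ℝ)+1) = ((n+1 : ℕ) : ℝ) by push_cast; ring, Real.rpow_natCast]
    rw [div_pow, one_pow]] at this
  calc ∫ x in Set.Ioi (0:ℝ), x ^ n * Real.exp (-(b*x))
      = ∫ t in Set.Ioi (0:ℝ), t ^ ((n:ℝ)+1-1) * Real.exp (-(b*t)) := by
        refine setIntegral_congr_fun measurableSet_Ioi (fun x hx => ?_)
        rw [add_sub_cancel_right, Real.rpow_natCast]
    _ = 1/b^(n+1) * n.factorial := this
    _ = n.factorial / b^(n+1) := by ring

lemma cos_pow_even_val (m : ℕ) :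
    ∫ t in (0:ℝ)..π, Real.cos t ^ (2*m)
      = π * ((2*m).factorial / ((m.factorial : ℝ) * m.factorial * 4^m)) := by
  rw [cos_pow_even_integral, wallis_prod]

/-- Modified Bessel function of the first kind of order one (integral representation). -/
noncomputable def besselI1 (z : ℝ) : ℝ :=
  (1 / Real.pi) * ∫ t in (0:ℝ)..Real.pi, Real.exp (z * Real.cos t) * Real.cos t

lemma besselI1_series (z : ℝ) :
    besselI1 z = ∑' k : ℕ, (z/2)^(2*k+1) / ((k.factorial : ℝ) * (k+1).factorial) := by
  set g : ℕ → ℝ → ℝ := fun n t => (z^n / n.factorial) * Real.cos t ^ (n+1) with hg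
  have hexp : ∀ t : ℝ, Real.exp (z * Real.cos t) * Real.cos t = ∑' n, g n t := by
    intro t
    rw [Real.exp_eq_exp_ℝ, NormedSpace.exp_eq_tsum_div, ← tsum_mul_right]
    refine tsum_congr fun n => ?_
    simp only [hg, mul_pow, pow_succ]
    ring
  have hint : ∀ n, Integrable (g n) (volume.restrict (Ioc 0 π)) := by
    intro n
    exact (Continuous.integrableOn_Ioc (by fun_prop))
  have hbound : ∀ n, ∫ t in Ioc (0:ℝ) π, ‖g n t‖ ≤ (|z|^n / n.factorial) * π := by
    intro n
    have h1 : ∀ t ∈ Ioc (0:ℝ) π, ‖g n t‖ ≤ |z|^n / n.factorial := by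
      intro t _
      simp only [hg, norm_mul, norm_div, norm_pow, Real.norm_eq_abs]
      rw [Nat.abs_cast]
      have h2 : |Real.cos t| ^ (n+1) ≤ 1 :=
        pow_le_one₀ (abs_nonneg _) (Real.abs_cos_le_one t)
      calc |z|^n / n.factorial * |Real.cos t|^(n+1)
          ≤ |z|^n / n.factorial * 1 := by
            apply mul_le_mul_of_nonneg_left h2 (by positivity)
        _ = |z|^n / n.factorial := mul_one _
    calc ∫ t in Ioc (0:ℝ) π, ‖g n t‖
        ≤ ∫ _t in Ioc (0:ℝ) π, (|z|^n / n.factorial : ℝ) := by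
          refine setIntegral_mono_on (hint n).norm (integrableOn_const ?_) measurableSet_Ioc h1
          rw [Real.volume_Ioc]; exact ENNReal.ofReal_ne_top
      _ = (|z|^n / n.factorial) * π := by
          rw [setIntegral_const, Real.volume_real_Ioc_of_le Real.pi_pos.le, smul_eq_mul,
            sub_zero]
          ring
  have hsum : Summable fun n => ∫ t in Ioc (0:ℝ) π, ‖g n t‖ :=
    Summable.of_nonneg_of_le (fun n => integral_nonneg fun t => norm_nonneg _)
      hbound ((Real.summable_pow_div_factorial |z|).mul_right π)
  have hswap : ∫ t in Ioc (0:ℝ) π, Real.exp (z * Real.cos t) * Real.cos t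
      = ∑' n, ∫ t in Ioc (0:ℝ) π, g n t := by
    calc ∫ t in Ioc (0:ℝ) π, Real.exp (z * Real.cos t) * Real.cos t
        = ∫ t in Ioc (0:ℝ) π, ∑' n, g n t :=
          setIntegral_congr_fun measurableSet_Ioc fun t _ => hexp t
      _ = ∑' n, ∫ t in Ioc (0:ℝ) π, g n t :=
          (integral_tsum_of_summable_integral_norm hint hsum).symm
  have hterm : ∀ n, ∫ t in Ioc (0:ℝ) π, g n t
      = (z^n / n.factorial) * ∫ t in (0:ℝ)..π, Real.cos t ^ (n+1) := by
    intro n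
    rw [← intervalIntegral.integral_of_le Real.pi_pos.le, ← intervalIntegral.integral_const_mul]
  have key : besselI1 z = (1/π) * ∑' n, (z^n / n.factorial) * ∫ t in (0:ℝ)..π,
      Real.cos t ^ (n+1) := by
    rw [besselI1, intervalIntegral.integral_of_le Real.pi_pos.le, hswap]
    congr 1
    exact tsum_congr hterm
  set h : ℕ → ℝ := fun n => (z^n / n.factorial) * ∫ t in (0:ℝ)..π, Real.cos t ^ (n+1) with hh
  have heven : ∀ k, h (2*k) = 0 := by
    intro k
    simp only [hh]
    rw [show 2*k+1 = 2*k+1 from rfl, cos_pow_odd_integral k, mul_zero]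
  have hodd : ∀ k, h (2*k+1) = π * ((z/2)^(2*k+1) / ((k.factorial : ℝ) * (k+1).factorial)) := by
    intro k
    simp only [hh]
    rw [show 2*k+1+1 = 2*(k+1) by ring, cos_pow_even_val (k+1)]
    have e1 : ((2*(k+1)).factorial : ℝ) = (2*k+2) * (2*k+1).factorial := by
      rw [show 2*(k+1) = (2*k+1)+1 by ring, Nat.factorial_succ]; push_cast; ring
    have e2 : ((k+1).factorial : ℝ) = (k+1) * k.factorial := by
      rw [Nat.factorial_succ]; push_cast; ring
    have e3 : (z/2)^(2*k+1) = z^(2*k+1) / 2^(2*k+1) := div_pow z 2 _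
    have e4 : (4:ℝ)^(k+1) = 2^(2*k+1) * 2 := by
      rw [show (4:ℝ) = 2^2 by norm_num, ← pow_mul]
      rw [← pow_succ]
      ring_nf
    rw [e1, e2, e3, e4]
    have c1 : ((2*k+1).factorial : ℝ) ≠ 0 := Nat.cast_ne_zero.mpr (Nat.factorial_ne_zero _)
    have c2 : (k.factorial : ℝ) ≠ 0 := Nat.cast_ne_zero.mpr (Nat.factorial_ne_zero _)
    have c3 : (2:ℝ)^(2*k+1) ≠ 0 := by positivity
    have c4 : ((k:ℝ)+1) ≠ 0 := by positivity
    field_simp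
  have hoddsummable : Summable fun k => h (2*k+1) := by
    apply Summable.of_abs
    apply Summable.of_nonneg_of_le (fun k => abs_nonneg _)
      (fun k => ?_) (((Real.summable_pow_div_factorial (z^2/4)).mul_left (π * (|z|/2))))
    rw [hodd k]
    have e5 : |(z/2)^(2*k+1)| = (|z|/2) * (z^2/4)^k := by
      rw [abs_pow, abs_div, show |(2:ℝ)| = 2 by norm_num, pow_succ, pow_mul,
        show (|z|/2)^2 = z^2/4 by rw [div_pow, sq_abs]; norm_num]
      ring
    have e6 : |π * ((z/2)^(2*k+1) / ((k.factorial : ℝ) * (k+1).factorial))|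
        = π * ((|z|/2) * (z^2/4)^k / ((k.factorial : ℝ) * (k+1).factorial)) := by
      rw [abs_mul, abs_of_pos Real.pi_pos, abs_div, abs_mul, Nat.abs_cast, Nat.abs_cast, e5]
    rw [e6]
    have h6 : (1:ℝ) ≤ ((k+1).factorial : ℝ) := by
      exact_mod_cast Nat.one_le_iff_ne_zero.mpr (Nat.factorial_ne_zero _)
    calc π * ((|z|/2) * (z^2/4)^k / ((k.factorial : ℝ) * (k+1).factorial))
        ≤ π * ((|z|/2) * (z^2/4)^k / ((k.factorial : ℝ) * 1)) := by
          have h7 : (0:ℝ) < (k.factorial:ℝ) := by positivity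
          apply mul_le_mul_of_nonneg_left _ Real.pi_pos.le
          apply div_le_div_of_nonneg_left (by positivity) (by positivity)
          exact mul_le_mul_of_nonneg_left h6 h7.le
      _ = π * (|z|/2) * ((z^2/4)^k / k.factorial) := by
          rw [mul_one]; ring
  have hsum_even : Summable fun k => h (2*k) := summable_zero.congr fun k => (heven k).symm
  have hsplit := tsum_even_add_odd hsum_even hoddsummable
  rw [key, ← hsplit]
  rw [tsum_congr heven, tsum_zero, zero_add, tsum_congr hodd, tsum_mul_left]
  rw [← mul_assoc, one_div, inv_mul_cancel₀ Real.pi_ne_zero, one_mul]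

/-- If `P` has the degree-2 noncentral chi-squared density with noncentrality `λ > 0` and
scale `a > 0`, then `E[R(2√(λP)/a)·√P] = √λ`, i.e.
`∫₀^∞ (√x/a) exp(−(x+λ)/a) I₁(2√(λx)/a) dx = √λ`. -/
theorem noncentral_chi_sq_bessel_ratio_mean (a lam : ℝ) (ha : 0 < a) (hlam : 0 < lam) :
    ∫ x in Set.Ioi (0:ℝ),
      (Real.sqrt x / a) * Real.exp (-(x + lam) / a) * besselI1 (2 * Real.sqrt (lam * x) / a)
      = Real.sqrt lam := by
  have hb : (0:ℝ) < 1/a := by positivity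
  set F : ℕ → ℝ → ℝ := fun k x =>
    (Real.sqrt lam * lam^k * Real.exp (-(lam/a)) /
      (a^(2*k+2) * k.factorial * (k+1).factorial)) * (x^(k+1) * Real.exp (-((1/a)*x))) with hF
  -- pointwise identity
  have hpt : ∀ x ∈ Ioi (0:ℝ),
      (Real.sqrt x / a) * Real.exp (-(x + lam) / a) * besselI1 (2 * Real.sqrt (lam * x) / a)
        = ∑' k, F k x := by
    intro x hx
    have hx0 : (0:ℝ) < x := hx
    rw [besselI1_series, ← tsum_mul_left]
    refine tsum_congr fun k => ?_
    have hs1 : Real.sqrt (lam*x) = Real.sqrt lam * Real.sqrt x := Real.sqrt_mul hlam.le x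
    have e0 : 2 * Real.sqrt (lam*x) / a / 2 = Real.sqrt lam * Real.sqrt x / a := by
      rw [hs1]; ring
    rw [e0]
    have e1 : (Real.sqrt lam * Real.sqrt x / a)^(2*k+1)
        = lam^k * Real.sqrt lam * (x^k * Real.sqrt x) / a^(2*k+1) := by
      rw [div_pow, mul_pow]
      congr 2
      · rw [pow_succ, pow_mul, Real.sq_sqrt hlam.le]
      · rw [pow_succ, pow_mul, Real.sq_sqrt hx0.le]
    rw [e1]
    have e2 : Real.exp (-(x + lam)/a) = Real.exp (-((1/a)*x)) * Real.exp (-(lam/a)) := by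
      rw [← Real.exp_add]; congr 1; field_simp; ring
    rw [e2, hF]
    have hsx : Real.sqrt x * Real.sqrt x = x := Real.mul_self_sqrt hx0.le
    have ha1 : a^(2*k+1) ≠ 0 := by positivity
    have ha2 : a^(2*k+2) ≠ 0 := by positivity
    have hk1 : (k.factorial : ℝ) ≠ 0 := Nat.cast_ne_zero.mpr (Nat.factorial_ne_zero _)
    have hk2 : ((k+1).factorial : ℝ) ≠ 0 := Nat.cast_ne_zero.mpr (Nat.factorial_ne_zero _)
    simp only
    trans (Real.sqrt lam * lam^k * Real.exp (-(lam/a)) /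
        (a^(2*k+2) * k.factorial * (k+1).factorial)) *
        ((Real.sqrt x * Real.sqrt x * x^k) * Real.exp (-((1/a)*x)))
    · ring
    · rw [hsx, show x * x^k = x^(k+1) from (pow_succ' x k).symm]
  have hFint : ∀ k, Integrable (F k) (volume.restrict (Ioi (0:ℝ))) := by
    intro k
    exact ((integrableOn_pow_exp (k+1) hb).const_mul _)
  have hFval : ∀ k, ∫ x in Ioi (0:ℝ), F k x
      = Real.sqrt lam * Real.exp (-(lam/a)) * ((lam/a)^k / k.factorial) := by
    intro k
    rw [hF]
    rw [MeasureTheory.integral_const_mul, integral_pow_exp (k+1) hb]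
    have e3 : ((1:ℝ)/a)^(k+1+1) = 1/a^(k+2) := by
      rw [div_pow, one_pow]
    rw [e3]
    have hk1 : (k.factorial : ℝ) ≠ 0 := Nat.cast_ne_zero.mpr (Nat.factorial_ne_zero _)
    have hk2 : ((k+1).factorial : ℝ) ≠ 0 := Nat.cast_ne_zero.mpr (Nat.factorial_ne_zero _)
    have ha2 : a^(2*k+2) ≠ 0 := by positivity
    have ha3 : (a:ℝ) ≠ 0 := ha.ne'
    rw [div_pow]
    field_simp
    rw [show a^(2*k+2) = a^(k+2) * a^k by rw [← pow_add]; ring_nf]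
  have hFnorm : ∀ k, ∫ x in Ioi (0:ℝ), ‖F k x‖
      = Real.sqrt lam * Real.exp (-(lam/a)) * ((lam/a)^k / k.factorial) := by
    intro k
    rw [← hFval k]
    refine setIntegral_congr_fun measurableSet_Ioi fun x hx => ?_
    have hx0 : (0:ℝ) < x := hx
    rw [Real.norm_eq_abs, abs_of_nonneg]
    rw [hF]
    positivity
  have hFsum : Summable fun k => ∫ x in Ioi (0:ℝ), ‖F k x‖ := by
    refine Summable.congr ?_ (fun k => (hFnorm k).symm)
    exact (Real.summable_pow_div_factorial (lam/a)).mul_left _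
  calc ∫ x in Set.Ioi (0:ℝ),
      (Real.sqrt x / a) * Real.exp (-(x + lam) / a) * besselI1 (2 * Real.sqrt (lam * x) / a)
      = ∫ x in Set.Ioi (0:ℝ), ∑' k, F k x :=
        setIntegral_congr_fun measurableSet_Ioi hpt
    _ = ∑' k, ∫ x in Ioi (0:ℝ), F k x :=
        (integral_tsum_of_summable_integral_norm hFint hFsum).symm
    _ = ∑' k, Real.sqrt lam * Real.exp (-(lam/a)) * ((lam/a)^k / k.factorial) :=
        tsum_congr hFval
    _ = Real.sqrt lam * Real.exp (-(lam/a)) * ∑' k : ℕ, ((lam/a)^k / k.factorial) :=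
        tsum_mul_left
    _ = Real.sqrt lam * Real.exp (-(lam/a)) * Real.exp (lam/a) := by
        rw [Real.exp_eq_exp_ℝ, NormedSpace.exp_eq_tsum_div]
    _ = Real.sqrt lam := by
        rw [mul_assoc, ← Real.exp_add, neg_add_cancel, Real.exp_zero, mul_one]
end

section
/- Let L ≥ 1 be an integer, let A > 0, σ_v > 0, α > 0, β > 0 with α ≠ β, let ψ_0, …, ψ_{L−1} ∈ ℝ, and let P_0, …, P_{L−1} > 0 be fixed positive reals. Set a = Aσ_v² and, for each l, λ_l(φ) = A(α² + β² + 2αβ cos(ψ_l + φ)). Then the log-likelihood function ℒ(φ) = ∑_{l=0}^{L−1} [ −(P_l + λ_l(φ))/a + log I₀( 2√(P_l λ_l(φ)) / a ) ] − L log a is differentiable in φ with derivative ℒ'(φ) = (2αβ/σ_v²) ∑_{l=0}^{L−1} sin(ψ_l + φ) · [ 1 − R( 2√(P_l λ_l(φ))/a ) · √(P_l / λ_l(φ)) ]. -/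
open Real Finset

/-- The Bessel ratio `R(z) = I₁(z)/I₀(z)`. -/
noncomputable def besselR (z : ℝ) : ℝ := besselI1 z / besselI0 z

open MeasureTheory Metric
lemma besselI0_pos (z : ℝ) : 0 < besselI0 z := by
  have hcont : Continuous fun t => Real.exp (z * Real.cos t) := by continuity
  have h := intervalIntegral.intervalIntegral_pos_of_pos_on
    (f := fun t => Real.exp (z * Real.cos t))
    (hcont.intervalIntegrable 0 Real.pi)
    (fun x _ => Real.exp_pos _) Real.pi_pos
  have hπ : 0 < 1 / Real.pi := by positivity
  exact mul_pos hπ h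

lemma besselI0_hasDerivAt (z : ℝ) : HasDerivAt besselI0 (besselI1 z) z := by
  have key : HasDerivAt (fun x => ∫ t in (0:ℝ)..Real.pi, Real.exp (x * Real.cos t))
      (∫ t in (0:ℝ)..Real.pi, Real.exp (z * Real.cos t) * Real.cos t) z := by
    have H := intervalIntegral.hasDerivAt_integral_of_dominated_loc_of_deriv_le
      (F := fun x t => Real.exp (x * Real.cos t))
      (F' := fun x t => Real.exp (x * Real.cos t) * Real.cos t)
      (x₀ := z) (bound := fun _ => Real.exp (|z| + 1))
      (a := 0) (b := Real.pi) (s := ball z 1) (μ := volume) (ball_mem_nhds z one_pos)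
      ?_ ?_ ?_ ?_ ?_ ?_
    · exact H.2
    · filter_upwards with x
      exact (Continuous.aestronglyMeasurable (by continuity)).restrict
    · exact (Continuous.intervalIntegrable (by continuity) 0 Real.pi)
    · exact (Continuous.aestronglyMeasurable (by continuity)).restrict
    · filter_upwards with t _ x hx
      have hxz : |x| ≤ |z| + 1 := by
        have := mem_ball_iff_norm.mp hx
        calc |x| = |z + (x - z)| := by ring_nf
        _ ≤ |z| + |x - z| := abs_add_le _ _
        _ ≤ |z| + 1 := by simp [Real.norm_eq_abs] at this; linarith
      have h1 : Real.exp (x * Real.cos t) ≤ Real.exp (|z| + 1) := by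
        apply Real.exp_le_exp.mpr
        calc x * Real.cos t ≤ |x * Real.cos t| := le_abs_self _
          _ = |x| * |Real.cos t| := abs_mul _ _
          _ ≤ (|z| + 1) * 1 := by
              apply mul_le_mul hxz (Real.abs_cos_le_one t) (abs_nonneg _)
              positivity
          _ = |z| + 1 := mul_one _
      calc ‖Real.exp (x * Real.cos t) * Real.cos t‖
          = Real.exp (x * Real.cos t) * |Real.cos t| := by
            rw [Real.norm_eq_abs, abs_mul, abs_of_pos (Real.exp_pos _)]
        _ ≤ Real.exp (x * Real.cos t) * 1 := by
            apply mul_le_mul_of_nonneg_left (Real.abs_cos_le_one t) (Real.exp_pos _).le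
        _ = Real.exp (x * Real.cos t) := mul_one _
        _ ≤ Real.exp (|z| + 1) := h1
    · exact intervalIntegrable_const
    · filter_upwards with t _ x _
      have := ((hasDerivAt_id x).mul_const (Real.cos t)).exp
      simpa using this
  have h2 := key.const_mul (1 / Real.pi)
  unfold besselI0 besselI1
  exact h2

lemma log_besselI0_hasDerivAt (z : ℝ) :
    HasDerivAt (fun z => Real.log (besselI0 z)) (besselR z) z :=
  (besselI0_hasDerivAt z).log (besselI0_pos z).ne'


/-- The log-likelihood of the phase `φ` given `L` independent noncentral chi-squared power
observations `P_l` is differentiable, with derivative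
`ℒ'(φ) = (2αβ/σ_v²) ∑_l sin(ψ_l + φ)[1 − R(2√(P_l λ_l(φ))/a)√(P_l/λ_l(φ))]`. -/
theorem loglikelihood_hasDerivAt (L : ℕ) (hL : 1 ≤ L) (A σv α β : ℝ)
    (hA : 0 < A) (hσv : 0 < σv) (hα : 0 < α) (hβ : 0 < β) (hαβ : α ≠ β)
    (ψ : Fin L → ℝ) (P : Fin L → ℝ) (hP : ∀ l, 0 < P l)
    (a : ℝ) (ha : a = A * σv^2)
    (lam : ℝ → Fin L → ℝ)
    (hlam : ∀ φ l, lam φ l = A * (α^2 + β^2 + 2 * α * β * Real.cos (ψ l + φ)))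
    (ℒ : ℝ → ℝ)
    (hℒ : ∀ φ, ℒ φ = (∑ l : Fin L, (-(P l + lam φ l) / a
        + Real.log (besselI0 (2 * Real.sqrt (P l * lam φ l) / a)))) - L * Real.log a) :
    ∀ φ : ℝ, HasDerivAt ℒ
      ((2 * α * β / σv^2) * ∑ l : Fin L, Real.sin (ψ l + φ) *
        (1 - besselR (2 * Real.sqrt (P l * lam φ l) / a) * Real.sqrt (P l / lam φ l))) φ := by
  intro φ
  have hapos : 0 < a := by rw [ha]; positivity
  have hab : 0 < (α - β)^2 := by
    have h := sub_ne_zero.mpr hαβ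
    positivity
  have hlampos : ∀ x l, 0 < lam x l := by
    intro x l
    rw [hlam]
    have hb : 0 < α^2 + β^2 + 2 * α * β * Real.cos (ψ l + x) := by
      nlinarith [Real.neg_one_le_cos (ψ l + x), mul_pos hα hβ, hab]
    exact mul_pos hA hb
  -- derivative of each term
  have hterm : ∀ l : Fin L, HasDerivAt
      (fun x => -(P l + lam x l) / a
        + Real.log (besselI0 (2 * Real.sqrt (P l * lam x l) / a)))
      ((2 * A * α * β * Real.sin (ψ l + φ)) / a
        + besselR (2 * Real.sqrt (P l * lam φ l) / a)
          * (2 * (1 / (2 * Real.sqrt (P l * lam φ l))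
              * (P l * -(2 * A * α * β * Real.sin (ψ l + φ)))) / a)) φ := by
    intro l
    have hlamfun : (fun x => lam x l)
        = fun x => A * ((α^2 + β^2) + 2 * α * β * Real.cos (ψ l + x)) := by
      funext x; rw [hlam]
    have hc : HasDerivAt (fun x => Real.cos (ψ l + x)) (-Real.sin (ψ l + φ)) φ := by
      have := (Real.hasDerivAt_cos (ψ l + φ)).comp φ ((hasDerivAt_id φ).const_add (ψ l))
      simpa [Function.comp_def] using this
    have hlamd : HasDerivAt (fun x => lam x l) (-(2 * A * α * β * Real.sin (ψ l + φ))) φ := by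
      rw [hlamfun]
      have := ((hc.const_mul (2 * α * β)).const_add (α^2 + β^2)).const_mul A
      exact this.congr_deriv (by ring)
    -- first summand
    have h1 : HasDerivAt (fun x => -(P l + lam x l) / a)
        ((2 * A * α * β * Real.sin (ψ l + φ)) / a) φ := by
      have := ((hlamd.const_add (P l)).neg).div_const a
      exact this.congr_deriv (by ring)
    -- sqrt argument
    have hqpos : 0 < P l * lam φ l := mul_pos (hP l) (hlampos φ l)
    have hq : HasDerivAt (fun x => P l * lam x l)
        (P l * -(2 * A * α * β * Real.sin (ψ l + φ))) φ := hlamd.const_mul (P l)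
    have hsq : HasDerivAt (fun x => Real.sqrt (P l * lam x l))
        (1 / (2 * Real.sqrt (P l * lam φ l))
          * (P l * -(2 * A * α * β * Real.sin (ψ l + φ)))) φ :=
      (Real.hasDerivAt_sqrt hqpos.ne').comp φ hq
    have hg : HasDerivAt (fun x => 2 * Real.sqrt (P l * lam x l) / a)
        (2 * (1 / (2 * Real.sqrt (P l * lam φ l))
          * (P l * -(2 * A * α * β * Real.sin (ψ l + φ)))) / a) φ :=
      (hsq.const_mul 2).div_const a
    have h2 : HasDerivAt
        (fun x => Real.log (besselI0 (2 * Real.sqrt (P l * lam x l) / a)))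
        (besselR (2 * Real.sqrt (P l * lam φ l) / a)
          * (2 * (1 / (2 * Real.sqrt (P l * lam φ l))
              * (P l * -(2 * A * α * β * Real.sin (ψ l + φ)))) / a)) φ :=
      (log_besselI0_hasDerivAt _).comp φ hg
    exact h1.add h2
  have hsum := HasDerivAt.fun_sum (u := Finset.univ) (fun l _ => hterm l)
  have hL' : HasDerivAt ℒ
      (∑ l : Fin L, ((2 * A * α * β * Real.sin (ψ l + φ)) / a
        + besselR (2 * Real.sqrt (P l * lam φ l) / a)
          * (2 * (1 / (2 * Real.sqrt (P l * lam φ l))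
              * (P l * -(2 * A * α * β * Real.sin (ψ l + φ)))) / a))) φ := by
    have heq : ℒ = fun x => (∑ l : Fin L, (-(P l + lam x l) / a
        + Real.log (besselI0 (2 * Real.sqrt (P l * lam x l) / a)))) - L * Real.log a := by
      funext x; exact hℒ x
    rw [heq]
    exact hsum.sub_const _
  convert hL' using 1
  rw [Finset.mul_sum]
  apply Finset.sum_congr rfl
  intro l _
  have hqpos : 0 < P l * lam φ l := mul_pos (hP l) (hlampos φ l)
  have hsqrtpos : 0 < Real.sqrt (P l * lam φ l) := Real.sqrt_pos.mpr hqpos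
  have hkey : Real.sqrt (P l / lam φ l) = P l / Real.sqrt (P l * lam φ l) := by
    rw [eq_div_iff hsqrtpos.ne', ← Real.sqrt_mul (div_pos (hP l) (hlampos φ l)).le]
    have : P l / lam φ l * (P l * lam φ l) = (P l)^2 := by
      field_simp [(hlampos φ l).ne']
    rw [this, Real.sqrt_sq (hP l).le]
  rw [hkey, ha]
  have hlφ : lam φ l ≠ 0 := (hlampos φ l).ne'
  field_simp
  ring
end

section
/- The function x ↦ x(1 − R(2√x)²) − √x/2 tends to 0 as x → +∞; that is, the asymptotic expansion x(1 − R(2√x)²) ~ √x/2 holds for large x. -/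
open Real MeasureTheory

/-- The function `g(γ) = ∫₀^∞ γ t e^{−γ(1+t)} I₀(2γ√t)(1 − R(2γ√t)²) dt` appearing in the
exact Cramér–Rao lower bound. -/
noncomputable def gFun (γ : ℝ) : ℝ :=
  ∫ t in Set.Ioi (0:ℝ), γ * t * Real.exp (-γ * (1 + t)) * besselI0 (2 * γ * Real.sqrt t) *
    (1 - (besselR (2 * γ * Real.sqrt t))^2)

/-- The asymptotic approximation
`ĝ(γ) = (1/4)√(π/γ) e^{−γ/2}((1 + 1/γ) I₀(γ/2) + I₁(γ/2))`. -/
noncomputable def gHat (γ : ℝ) : ℝ :=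
  (1 / 4) * Real.sqrt (Real.pi / γ) * Real.exp (-γ / 2) *
    ((1 + 1 / γ) * besselI0 (γ / 2) + besselI1 (γ / 2))

section BesselAux
open intervalIntegral Filter

noncomputable def Mint (z : ℝ) (k : ℕ) : ℝ :=
  ∫ t in (0:ℝ)..Real.pi, (1 - Real.cos t)^k * Real.exp (z * Real.cos t)

lemma Mint_cont (z : ℝ) (k : ℕ) :
    Continuous fun t : ℝ => (1 - Real.cos t)^k * Real.exp (z * Real.cos t) := by fun_prop

lemma Mint_intg (z : ℝ) (k : ℕ) (a b : ℝ) :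
    IntervalIntegrable (fun t : ℝ => (1 - Real.cos t)^k * Real.exp (z * Real.cos t))
      volume a b := (Mint_cont z k).intervalIntegrable a b

lemma Mint_nonneg (z : ℝ) (k : ℕ) : 0 ≤ Mint z k := by
  apply intervalIntegral.integral_nonneg Real.pi_pos.le
  intro t _
  have h1 : (0:ℝ) ≤ 1 - Real.cos t := by
    have := Real.cos_le_one t; linarith
  positivity

lemma rec0 (z : ℝ) : z * Mint z 2 = (2*z+1) * Mint z 1 - Mint z 0 := by
  have hF : ∀ t ∈ Set.uIcc (0:ℝ) Real.pi,
      HasDerivAt (fun t => Real.sin t * Real.exp (z * Real.cos t))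
        (Real.cos t * Real.exp (z * Real.cos t)
          + Real.sin t * (Real.exp (z * Real.cos t) * (z * -Real.sin t))) t := by
    intro t _
    exact (Real.hasDerivAt_sin t).mul (((Real.hasDerivAt_cos t).const_mul z).exp)
  have hint : IntervalIntegrable (fun t => Real.cos t * Real.exp (z * Real.cos t)
      + Real.sin t * (Real.exp (z * Real.cos t) * (z * -Real.sin t))) volume 0 Real.pi := by
    apply Continuous.intervalIntegrable; fun_prop
  have h0 : (∫ t in (0:ℝ)..Real.pi, (Real.cos t * Real.exp (z * Real.cos t)
      + Real.sin t * (Real.exp (z * Real.cos t) * (z * -Real.sin t)))) = 0 := by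
    rw [intervalIntegral.integral_eq_sub_of_hasDerivAt hF hint]
    simp
  have hsplit : z * Mint z 2 - ((2*z+1) * Mint z 1 - Mint z 0)
      = ∫ t in (0:ℝ)..Real.pi, (Real.cos t * Real.exp (z * Real.cos t)
        + Real.sin t * (Real.exp (z * Real.cos t) * (z * -Real.sin t))) := by
    rw [Mint, Mint, Mint, ← intervalIntegral.integral_const_mul,
      ← intervalIntegral.integral_const_mul, ← intervalIntegral.integral_sub
        ((Mint_intg z 1 0 Real.pi).const_mul _) (Mint_intg z 0 0 Real.pi),
      ← intervalIntegral.integral_sub ((Mint_intg z 2 0 Real.pi).const_mul _)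
        (((Mint_intg z 1 0 Real.pi).const_mul _).sub (Mint_intg z 0 0 Real.pi))]
    apply intervalIntegral.integral_congr
    intro t _
    have hs := Real.sin_sq_add_cos_sq t
    linear_combination (z * Real.exp (z * Real.cos t)) * hs
  linarith [hsplit.trans h0]

lemma rec1 (z : ℝ) : z * Mint z 3 = (2*z+2) * Mint z 2 - 3 * Mint z 1 := by
  have hF : ∀ t ∈ Set.uIcc (0:ℝ) Real.pi,
      HasDerivAt (fun t => Real.sin t * (1 - Real.cos t) * Real.exp (z * Real.cos t))
        ((Real.cos t * (1 - Real.cos t) + Real.sin t * -(-Real.sin t)) * Real.exp (z * Real.cos t)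
          + Real.sin t * (1 - Real.cos t) * (Real.exp (z * Real.cos t) * (z * -Real.sin t))) t := by
    intro t _
    exact ((Real.hasDerivAt_sin t).mul ((Real.hasDerivAt_cos t).const_sub 1)).mul
      (((Real.hasDerivAt_cos t).const_mul z).exp)
  have hint : IntervalIntegrable (fun t =>
      (Real.cos t * (1 - Real.cos t) + Real.sin t * -(-Real.sin t)) * Real.exp (z * Real.cos t)
        + Real.sin t * (1 - Real.cos t) * (Real.exp (z * Real.cos t) * (z * -Real.sin t)))
      volume 0 Real.pi := by
    apply Continuous.intervalIntegrable; fun_prop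
  have h0 : (∫ t in (0:ℝ)..Real.pi,
      ((Real.cos t * (1 - Real.cos t) + Real.sin t * -(-Real.sin t)) * Real.exp (z * Real.cos t)
        + Real.sin t * (1 - Real.cos t) * (Real.exp (z * Real.cos t) * (z * -Real.sin t)))) = 0 := by
    rw [intervalIntegral.integral_eq_sub_of_hasDerivAt hF hint]
    simp
  have hsplit : z * Mint z 3 - ((2*z+2) * Mint z 2 - 3 * Mint z 1)
      = ∫ t in (0:ℝ)..Real.pi,
        ((Real.cos t * (1 - Real.cos t) + Real.sin t * -(-Real.sin t)) * Real.exp (z * Real.cos t)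
          + Real.sin t * (1 - Real.cos t) * (Real.exp (z * Real.cos t) * (z * -Real.sin t))) := by
    rw [Mint, Mint, Mint, ← intervalIntegral.integral_const_mul,
      ← intervalIntegral.integral_const_mul, ← intervalIntegral.integral_const_mul,
      ← intervalIntegral.integral_sub ((Mint_intg z 2 0 Real.pi).const_mul _)
        ((Mint_intg z 1 0 Real.pi).const_mul _),
      ← intervalIntegral.integral_sub ((Mint_intg z 3 0 Real.pi).const_mul _)
        (((Mint_intg z 2 0 Real.pi).const_mul _).sub ((Mint_intg z 1 0 Real.pi).const_mul _))]
    apply intervalIntegral.integral_congr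
    intro t _
    have hs := Real.sin_sq_add_cos_sq t
    linear_combination ((z * (1 - Real.cos t) - 1) * Real.exp (z * Real.cos t)) * hs
  linarith [hsplit.trans h0]

lemma M0_lb {z : ℝ} (hz : 1 ≤ z) : Real.exp (z - 1/2) / Real.sqrt z ≤ Mint z 0 := by
  have hz0 : (0:ℝ) < z := lt_of_lt_of_le one_pos hz
  have hs1 : 1 ≤ Real.sqrt z := by
    rw [show (1:ℝ) = Real.sqrt 1 by simp]
    exact Real.sqrt_le_sqrt hz
  set a : ℝ := (Real.sqrt z)⁻¹ with ha
  have ha0 : 0 < a := by positivity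
  have ha1 : a ≤ 1 := by
    rw [ha]; exact inv_le_one_of_one_le₀ hs1
  have hapi : a ≤ Real.pi := ha1.trans (by linarith [Real.pi_gt_three])
  have ha2 : a ^ 2 = z⁻¹ := by
    rw [ha, ← Real.sqrt_inv, Real.sq_sqrt (by positivity)]
  -- split the integral
  have hsplit : Mint z 0 = (∫ t in (0:ℝ)..a, (1 - Real.cos t)^0 * Real.exp (z * Real.cos t))
      + ∫ t in a..Real.pi, (1 - Real.cos t)^0 * Real.exp (z * Real.cos t) := by
    rw [Mint, intervalIntegral.integral_add_adjacent_intervals (Mint_intg z 0 0 a)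
      (Mint_intg z 0 a Real.pi)]
  have h2 : 0 ≤ ∫ t in a..Real.pi, (1 - Real.cos t)^0 * Real.exp (z * Real.cos t) := by
    apply intervalIntegral.integral_nonneg hapi
    intro t _; positivity
  have h1 : a * Real.exp (z - 1/2) ≤ ∫ t in (0:ℝ)..a, (1 - Real.cos t)^0 * Real.exp (z * Real.cos t) := by
    have := intervalIntegral.integral_mono_on (μ := volume) (a := 0) (b := a) ha0.le
      (_root_.intervalIntegrable_const (c := Real.exp (z - 1/2)))
      (Mint_intg z 0 0 a) ?_
    · simpa [smul_eq_mul, mul_comm] using this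
    · intro t ht
      simp only [pow_zero, one_mul]
      apply Real.exp_le_exp.2
      have hct : 1 - t^2/2 ≤ Real.cos t := Real.one_sub_sq_div_two_le_cos
      have ht2 : t^2 ≤ a^2 := by
        have := ht.1; have := ht.2
        nlinarith
      have : z - 1/2 ≤ z * (1 - t^2/2) := by
        have : z * t^2 ≤ z * a^2 := by nlinarith
        rw [ha2] at this
        have hzz : z * z⁻¹ = 1 := mul_inv_cancel₀ hz0.ne'
        nlinarith
      calc z - 1/2 ≤ z * (1 - t^2/2) := this
        _ ≤ z * Real.cos t := by nlinarith
  have : a * Real.exp (z - 1/2) ≤ Mint z 0 := by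
    rw [hsplit]; linarith
  calc Real.exp (z - 1/2) / Real.sqrt z = a * Real.exp (z - 1/2) := by
        rw [ha]; field_simp
    _ ≤ Mint z 0 := this

lemma pow_le_fact_mul_exp {x : ℝ} (hx : 0 ≤ x) (k : ℕ) :
    x ^ k ≤ k.factorial * Real.exp x := by
  have h1 : x ^ k / k.factorial ≤ Real.exp x :=
    le_trans (Finset.single_le_sum (f := fun i => x ^ i / (i.factorial : ℝ))
      (fun i _ => by positivity) (Finset.self_mem_range_succ k))
      (Real.sum_le_exp_of_nonneg hx _)
  have hk : (0:ℝ) < k.factorial := by positivity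
  calc x ^ k = (x ^ k / k.factorial) * k.factorial := by field_simp
    _ ≤ Real.exp x * k.factorial := mul_le_mul_of_nonneg_right h1 hk.le
    _ = k.factorial * Real.exp x := by ring

lemma Mk_ub {z : ℝ} (hz : 1 ≤ z) (k : ℕ) :
    Mint z k ≤ (k.factorial * 2^k) * (Real.sqrt (Real.pi^3) / 2) * Real.exp z
      / (z^k * Real.sqrt z) := by
  have hz0 : (0:ℝ) < z := lt_of_lt_of_le one_pos hz
  have hpi := Real.pi_pos
  -- pointwise bound
  have hpt : ∀ t ∈ Set.Icc (0:ℝ) Real.pi,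
      (1 - Real.cos t)^k * Real.exp (z * Real.cos t)
        ≤ (k.factorial * (2/z)^k) * Real.exp z * Real.exp (-(z/Real.pi^2) * t^2) := by
    intro t ht
    have hu0 : (0:ℝ) ≤ 1 - Real.cos t := by linarith [Real.cos_le_one t]
    have hcq : Real.cos t ≤ 1 - 2/Real.pi^2 * t^2 := by
      apply Real.cos_le_one_sub_mul_cos_sq
      rw [abs_of_nonneg ht.1]; exact ht.2
    have h1 : (1 - Real.cos t)^k
        ≤ (k.factorial * (2/z)^k) * Real.exp (z * (1 - Real.cos t) / 2) := by
      have hxp : (0:ℝ) ≤ z * (1 - Real.cos t) / 2 := by positivity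
      have := pow_le_fact_mul_exp hxp k
      have heq : (1 - Real.cos t)^k = (2/z)^k * (z * (1 - Real.cos t) / 2)^k := by
        rw [← mul_pow]; congr 1; field_simp
      rw [heq]
      calc (2/z)^k * (z * (1 - Real.cos t) / 2)^k
          ≤ (2/z)^k * (k.factorial * Real.exp (z * (1 - Real.cos t) / 2)) :=
            mul_le_mul_of_nonneg_left this (by positivity)
        _ = (k.factorial * (2/z)^k) * Real.exp (z * (1 - Real.cos t) / 2) := by ring
    calc (1 - Real.cos t)^k * Real.exp (z * Real.cos t)
        ≤ ((k.factorial * (2/z)^k) * Real.exp (z * (1 - Real.cos t) / 2))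
            * Real.exp (z * Real.cos t) :=
          mul_le_mul_of_nonneg_right h1 (Real.exp_pos _).le
      _ = (k.factorial * (2/z)^k) * Real.exp (z * (1 - Real.cos t) / 2 + z * Real.cos t) := by
          rw [Real.exp_add]; ring
      _ ≤ (k.factorial * (2/z)^k) * Real.exp (z + -(z/Real.pi^2) * t^2) := by
          apply mul_le_mul_of_nonneg_left _ (by positivity)
          apply Real.exp_le_exp.2
          have h2 : 2/Real.pi^2 * t^2 ≤ 1 - Real.cos t := by linarith
          have h3 : z * (2/Real.pi^2 * t^2) ≤ z * (1 - Real.cos t) :=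
            mul_le_mul_of_nonneg_left h2 hz0.le
          have : z * (2/Real.pi^2 * t^2) = 2 * ((z/Real.pi^2) * t^2) := by ring
          nlinarith
      _ = (k.factorial * (2/z)^k) * Real.exp z * Real.exp (-(z/Real.pi^2) * t^2) := by
          rw [Real.exp_add]; ring
  -- integral comparison
  have hmono : Mint z k ≤ ∫ t in (0:ℝ)..Real.pi,
      (k.factorial * (2/z)^k) * Real.exp z * Real.exp (-(z/Real.pi^2) * t^2) := by
    apply intervalIntegral.integral_mono_on hpi.le (Mint_intg z k 0 Real.pi) _ hpt
    apply Continuous.intervalIntegrable; fun_prop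
  -- gaussian bound
  have hgauss : (∫ t in (0:ℝ)..Real.pi, Real.exp (-(z/Real.pi^2) * t^2))
      ≤ Real.sqrt (Real.pi^3) / Real.sqrt z / 2 := by
    have hb : (0:ℝ) < z/Real.pi^2 := by positivity
    have hInt : IntegrableOn (fun t : ℝ => Real.exp (-(z/Real.pi^2) * t^2)) (Set.Ioi 0) :=
      (integrable_exp_neg_mul_sq hb).integrableOn
    rw [intervalIntegral.integral_of_le hpi.le]
    calc (∫ t in Set.Ioc (0:ℝ) Real.pi, Real.exp (-(z/Real.pi^2) * t^2))
        ≤ ∫ t in Set.Ioi (0:ℝ), Real.exp (-(z/Real.pi^2) * t^2) := by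
          apply setIntegral_mono_set hInt
          · filter_upwards with t using (Real.exp_pos _).le
          · exact HasSubset.Subset.eventuallyLE Set.Ioc_subset_Ioi_self
      _ = Real.sqrt (Real.pi / (z/Real.pi^2)) / 2 := integral_gaussian_Ioi _
      _ = Real.sqrt (Real.pi^3) / Real.sqrt z / 2 := by
          rw [show Real.pi / (z/Real.pi^2) = Real.pi^3 / z by field_simp,
            Real.sqrt_div (by positivity)]
  calc Mint z k ≤ ∫ t in (0:ℝ)..Real.pi,
        (k.factorial * (2/z)^k) * Real.exp z * Real.exp (-(z/Real.pi^2) * t^2) := hmono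
    _ = (k.factorial * (2/z)^k) * Real.exp z
        * ∫ t in (0:ℝ)..Real.pi, Real.exp (-(z/Real.pi^2) * t^2) := by
        rw [← intervalIntegral.integral_const_mul]
    _ ≤ (k.factorial * (2/z)^k) * Real.exp z * (Real.sqrt (Real.pi^3) / Real.sqrt z / 2) :=
        mul_le_mul_of_nonneg_left hgauss (by positivity)
    _ = (k.factorial * 2^k) * (Real.sqrt (Real.pi^3) / 2) * Real.exp z / (z^k * Real.sqrt z) := by
        rw [div_pow]
        field_simp

lemma final_calc (z w E X e1 s P : ℝ) (hw : 0 < w) (hzw : z = w^2) (hE : 0 < E)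
    (hX : 0 < X) (he1 : 0 < e1) (hs : 0 < s) (hP : P = s^2)
    (hxe : X^2 * e1 = E^2) :
    ((z*(s*E/(z*w))^2 + z^3*(s*E/(z*w))*(24*s*E/(z^3*w)))*(4*(z+1)^2)
      + z^3*(3*(s*E/(z*w)) + z*(24*s*E/(z^3*w)))^2) / ((X/w)^2*(4*(z+1)^2))
    ≤ 829 * e1 * P / 4 / z := by
  subst hzw hP
  have hxe2 : X^2 = E^2/e1 := by
    rw [eq_div_iff he1.ne']; exact hxe
  have hw0 : w ≠ 0 := hw.ne'
  have hnum : ((w^2*(s*E/(w^2*w))^2 + (w^2)^3*(s*E/(w^2*w))*(24*s*E/((w^2)^3*w)))*(4*(w^2+1)^2)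
      + (w^2)^3*(3*(s*E/(w^2*w)) + w^2*(24*s*E/((w^2)^3*w)))^2)
      = s^2*E^2*(100*(w^2+1)^2+(3*w^2+24)^2)/w^4 := by
    field_simp
    ring
  have hden : (X/w)^2*(4*(w^2+1)^2) = E^2*(4*(w^2+1)^2)/(e1*w^2) := by
    rw [div_pow, hxe2]; ring
  rw [hnum, hden]
  have h729 : (100*(w^2+1)^2 + (3*w^2+24)^2) ≤ 829*(w^2+1)^2 := by nlinarith [sq_nonneg w]
  calc (s^2*E^2*(100*(w^2+1)^2+(3*w^2+24)^2)/w^4) / (E^2*(4*(w^2+1)^2)/(e1*w^2))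
      = (e1*s^2/4) * ((100*(w^2+1)^2+(3*w^2+24)^2)/(w^2*(w^2+1)^2)) := by
        field_simp
    _ ≤ (e1*s^2/4) * ((829*(w^2+1)^2)/(w^2*(w^2+1)^2)) := by gcongr
    _ = 829*e1*s^2/4/w^2 := by
        field_simp

lemma besselR_eq {z : ℝ} (h : Mint z 0 ≠ 0) :
    besselR z = (Mint z 0 - Mint z 1) / Mint z 0 := by
  have hI0 : besselI0 z = (1/Real.pi) * Mint z 0 := by
    simp only [besselI0, Mint, pow_zero, one_mul]
  have hI1 : besselI1 z = (1/Real.pi) * (Mint z 0 - Mint z 1) := by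
    rw [besselI1, Mint, Mint, ← intervalIntegral.integral_sub (Mint_intg z 0 0 Real.pi)
      (Mint_intg z 1 0 Real.pi)]
    congr 1
    apply intervalIntegral.integral_congr
    intro t _
    ring
  rw [besselR, hI0, hI1, mul_div_mul_left _ _ (by positivity : (1:ℝ)/Real.pi ≠ 0)]

set_option maxHeartbeats 1000000 in
lemma phi_bound {z : ℝ} (hz : 1 ≤ z) :
    |z^2*(1 - (besselR z)^2) - z| ≤ 829 * Real.exp 1 * Real.pi^3 / 4 / z := by
  have hz0 : (0:ℝ) < z := lt_of_lt_of_le one_pos hz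
  set M0 := Mint z 0 with hM0def
  set M1 := Mint z 1 with hM1def
  set M3 := Mint z 3 with hM3def
  have hM0pos : 0 < M0 := lt_of_lt_of_le (by positivity) (M0_lb hz)
  have h2 := rec0 z
  have h3 := rec1 z
  have hkey : 2*(z+1)*M0 = (4*z^2+3*z+2)*M1 - z^2*M3 := by
    linear_combination z*h3 + (2*z+2)*h2
  have hR : besselR z = (M0 - M1)/M0 := besselR_eq hM0pos.ne'
  set NumQ : ℝ := (-(z*M1^2) + z^3*M1*M3)*(4*(z+1)^2) - z^3*(3*M1+z*M3)^2 with hNumQ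
  have E2 : (4*(z+1)^2) * ((z^2*(M0^2 - (M0-M1)^2) - z*M0^2) * (4*(z+1)^2))
      = (4*(z+1)^2) * NumQ := by
    rw [hNumQ]
    linear_combination (-8*z*M1 - 8*z*M0 - 12*z^2*M1 - 24*z^2*M0 + 4*z^3*M3 - 24*z^3*M0
      + 8*z^4*M3 + 4*z^4*M1 - 8*z^4*M0 + 4*z^5*M3) * hkey
  have E0 := mul_left_cancel₀ (show (4*(z+1)^2 : ℝ) ≠ 0 by positivity) E2
  have hdiv : ((M0-M1)/M0)^2 * M0^2 = (M0-M1)^2 := by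
    rw [div_pow]; field_simp
  have key : (z^2*(1 - (besselR z)^2) - z) * (M0^2 * (4*(z+1)^2)) = NumQ := by
    rw [hR]
    linear_combination E0 - (z^2*(4*(z+1)^2)) * hdiv
  have hD : (0:ℝ) < M0^2 * (4*(z+1)^2) := by positivity
  have hphi : z^2*(1 - (besselR z)^2) - z = NumQ / (M0^2 * (4*(z+1)^2)) := by
    rw [eq_div_iff hD.ne']; exact key
  rw [hphi, abs_div, abs_of_pos hD]
  -- bounds on M1, M3
  set s := Real.sqrt (Real.pi^3) with hsdef
  set E := Real.exp z with hEdef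
  have hspos : 0 < s := by rw [hsdef]; positivity
  have hEpos : 0 < E := Real.exp_pos z
  set c1 : ℝ := s * E / (z * Real.sqrt z) with hc1
  set c3 : ℝ := 24 * s * E / (z^3 * Real.sqrt z) with hc3
  have hwpos : 0 < Real.sqrt z := Real.sqrt_pos.2 hz0
  have hM1ub : M1 ≤ c1 := by
    calc M1 ≤ ((1:ℕ).factorial * 2^1) * (s/2) * E / (z^1 * Real.sqrt z) := Mk_ub hz 1
      _ = c1 := by rw [hc1]; norm_num [Nat.factorial]; ring
  have hM3ub : M3 ≤ c3 := by
    calc M3 ≤ ((3:ℕ).factorial * 2^3) * (s/2) * E / (z^3 * Real.sqrt z) := Mk_ub hz 3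
      _ = c3 := by rw [hc3]; norm_num [Nat.factorial]; ring
  have hM1n : 0 ≤ M1 := Mint_nonneg z 1
  have hM3n : 0 ≤ M3 := Mint_nonneg z 3
  have hc1n : 0 ≤ c1 := by positivity
  have hc3n : 0 ≤ c3 := by positivity
  -- bound |NumQ|
  have hNum1 : |NumQ| ≤ (z*M1^2 + z^3*M1*M3)*(4*(z+1)^2) + z^3*(3*M1+z*M3)^2 := by
    rw [hNumQ]
    calc |(-(z*M1^2) + z^3*M1*M3)*(4*(z+1)^2) - z^3*(3*M1+z*M3)^2|
        ≤ |(-(z*M1^2) + z^3*M1*M3)*(4*(z+1)^2)| + |z^3*(3*M1+z*M3)^2| := abs_sub _ _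
      _ ≤ (z*M1^2 + z^3*M1*M3)*(4*(z+1)^2) + z^3*(3*M1+z*M3)^2 := by
          rw [abs_of_nonneg (by positivity : (0:ℝ) ≤ z^3*(3*M1+z*M3)^2), abs_mul,
            abs_of_nonneg (by positivity : (0:ℝ) ≤ 4*(z+1)^2)]
          have hA : (0:ℝ) ≤ z*M1^2 := mul_nonneg hz0.le (sq_nonneg M1)
          have hB : (0:ℝ) ≤ z^3*M1*M3 :=
            mul_nonneg (mul_nonneg (pow_nonneg hz0.le 3) hM1n) hM3n
          have habs : |(-(z*M1^2) + z^3*M1*M3)| ≤ z*M1^2 + z^3*M1*M3 := by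
            rw [abs_le]; constructor <;> nlinarith
          nlinarith [sq_nonneg (z+1), habs]
  have hNum2 : (z*M1^2 + z^3*M1*M3)*(4*(z+1)^2) + z^3*(3*M1+z*M3)^2
      ≤ (z*c1^2 + z^3*c1*c3)*(4*(z+1)^2) + z^3*(3*c1+z*c3)^2 := by
    gcongr <;> first | exact hM1n | exact hM3n | exact hM1ub | exact hM3ub | positivity
  set Nub : ℝ := (z*c1^2 + z^3*c1*c3)*(4*(z+1)^2) + z^3*(3*c1+z*c3)^2 with hNubdef
  set Dlb : ℝ := (Real.exp (z-1/2)/Real.sqrt z)^2 * (4*(z+1)^2) with hDlbdef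
  have hDlbpos : 0 < Dlb := by rw [hDlbdef]; positivity
  have hDlb : Dlb ≤ M0^2 * (4*(z+1)^2) := by
    rw [hDlbdef]
    have hsq : (Real.exp (z-1/2)/Real.sqrt z)^2 ≤ M0^2 :=
      pow_le_pow_left₀ (by positivity) (M0_lb hz) 2
    exact mul_le_mul_of_nonneg_right hsq (by positivity)
  have step1 : |NumQ| / (M0^2 * (4*(z+1)^2)) ≤ Nub / Dlb :=
    div_le_div₀ (by positivity) (hNum1.trans hNum2) hDlbpos hDlb
  refine step1.trans ?_
  rw [hNubdef, hDlbdef, hc1, hc3]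
  have hxe : Real.exp (z-1/2)^2 * Real.exp 1 = E^2 := by
    rw [hEdef, sq, sq, ← Real.exp_add, ← Real.exp_add, ← Real.exp_add]
    congr 1
    ring
  exact final_calc z (Real.sqrt z) E (Real.exp (z-1/2)) (Real.exp 1) s (Real.pi^3)
    hwpos (Real.sq_sqrt hz0.le).symm hEpos (Real.exp_pos _) (Real.exp_pos 1) hspos
    (by rw [hsdef, Real.sq_sqrt (by positivity)]) hxe

end BesselAux

open Filter


/-- The asymptotic expansion `x(1 − R(2√x)²) ~ √x/2` holds for large `x`:
the difference tends to zero at infinity. -/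
theorem bessel_ratio_asymptotic_expansion :
    Filter.Tendsto (fun x : ℝ => x * (1 - (besselR (2 * Real.sqrt x))^2) - Real.sqrt x / 2)
      Filter.atTop (nhds 0) := by

  have hphi : Tendsto (fun z : ℝ => z^2*(1 - (besselR z)^2) - z) atTop (nhds 0) := by
    refine squeeze_zero_norm' ?_
      ((tendsto_const_nhds (x := 829 * Real.exp 1 * Real.pi^3 / 4)).div_atTop tendsto_id)
    filter_upwards [eventually_ge_atTop (1:ℝ)] with z hz
    rw [Real.norm_eq_abs]
    exact phi_bound hz
  have hsqrt : Tendsto Real.sqrt atTop atTop := by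
    apply tendsto_atTop_atTop_of_monotone (fun _ _ h => Real.sqrt_le_sqrt h)
    intro b
    exact ⟨b^2, by rw [Real.sqrt_sq_eq_abs]; exact le_abs_self b⟩
  have hcomp : Tendsto (fun x : ℝ => 2 * Real.sqrt x) atTop atTop :=
    hsqrt.const_mul_atTop two_pos
  have h4 : Tendsto (fun x : ℝ =>
      ((2*Real.sqrt x)^2*(1 - (besselR (2*Real.sqrt x))^2) - 2*Real.sqrt x)/4)
      atTop (nhds 0) := by
    have := (hphi.comp hcomp).div_const 4
    simpa using this
  apply h4.congr'
  filter_upwards [eventually_ge_atTop (0:ℝ)] with x hx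
  have hsq : (2*Real.sqrt x)^2 = 4*x := by
    rw [mul_pow, Real.sq_sqrt hx]; ring
  rw [hsq]; ring
end

section
/- As x → +∞, √(2πx) · e^{−x} · I₀(x) → 1; that is, I₀(x) ~ e^x / √(2πx) for large x. -/
open Real MeasureTheory
open Filter Set

/-- The asymptotic behavior `I₀(x) ~ e^x/√(2πx)` as `x → ∞`. -/
-- pointwise limit
lemma lim_pt (s : ℝ) : Tendsto (fun x : ℝ => x * (Real.cos (s / Real.sqrt x) - 1))
    atTop (nhds (-(s^2/2))) := by
  have h0 : Tendsto (fun x : ℝ => x * (Real.cos (s / Real.sqrt x) - 1) - (-(s^2/2)))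
      atTop (nhds 0) := by
    apply squeeze_zero_norm' (a := fun x : ℝ => s^4 * (5/96) / x)
    · filter_upwards [eventually_ge_atTop (max 1 (s^2))] with x hx
      have hx1 : (1:ℝ) ≤ x := le_trans (le_max_left _ _) hx
      have hxs : s^2 ≤ x := le_trans (le_max_right _ _) hx
      have hxpos : (0:ℝ) < x := by linarith
      have hsq : Real.sqrt x * Real.sqrt x = x := Real.mul_self_sqrt hxpos.le
      have hsqpos : 0 < Real.sqrt x := Real.sqrt_pos.2 hxpos
      obtain ⟨u, hu⟩ : ∃ u : ℝ, u = s / Real.sqrt x := ⟨_, rfl⟩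
      have hu1 : |u| ≤ 1 := by
        rw [hu, abs_div, abs_of_pos hsqpos, div_le_one hsqpos]
        have := Real.sqrt_le_sqrt hxs
        rwa [Real.sqrt_sq_eq_abs] at this
      rw [show s / Real.sqrt x = u from hu.symm]
      have key : x * (Real.cos u - 1) - (-(s^2/2)) = x * (Real.cos u - (1 - u^2/2)) := by
        have : x * u^2 = s^2 := by
          rw [hu, div_pow, Real.sq_sqrt hxpos.le, mul_div_cancel₀ _ hxpos.ne']
        linear_combination -this / 2
      rw [key, Real.norm_eq_abs, abs_mul, abs_of_pos hxpos]
      have hb := Real.cos_bound hu1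
      have hu4 : |u|^4 = s^4 / x^2 := by
        rw [hu, abs_div, abs_of_pos hsqpos, div_pow, ← Real.sqrt_sq_eq_abs]
        rw [show ((Real.sqrt x)^4 : ℝ) = (Real.sqrt x * Real.sqrt x)^2 by ring, hsq]
        congr 1
        rw [Real.sqrt_sq_eq_abs, ← abs_pow, abs_of_nonneg (by positivity)]
      calc x * |Real.cos u - (1 - u^2/2)| ≤ x * (|u|^4 * (5/96)) := by
            exact mul_le_mul_of_nonneg_left hb hxpos.le
        _ = s^4 * (5/96) / x := by rw [hu4]; field_simp
    · have : Tendsto (fun x : ℝ => s^4 * (5/96) / x) atTop (nhds 0) :=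
        tendsto_const_nhds.div_atTop tendsto_id
      exact this
  have := h0.add_const (-(s^2/2))
  simpa using this

lemma integral_tendsto_aux :
    Tendsto (fun x : ℝ => ∫ s : ℝ, (Set.Ioc (0:ℝ) (Real.pi * Real.sqrt x)).indicator
      (fun s => Real.exp (x * (Real.cos (s / Real.sqrt x) - 1))) s)
      atTop (nhds (Real.sqrt (2 * Real.pi) / 2)) := by
  have hgauss : (∫ s : ℝ, (Set.Ioi (0:ℝ)).indicator (fun s => Real.exp (-(s^2/2))) s)
      = Real.sqrt (2 * Real.pi) / 2 := by
    rw [MeasureTheory.integral_indicator measurableSet_Ioi]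
    have h := integral_gaussian_Ioi (1/2)
    have : ∀ s : ℝ, Real.exp (-(s^2/2)) = Real.exp (-(1/2) * s^2) := by
      intro s; ring_nf
    simp only [this]
    rw [h]
    rw [show Real.pi / (1/2) = 2 * Real.pi by ring]
  rw [← hgauss]
  apply tendsto_integral_filter_of_dominated_convergence
      (bound := fun s => Real.exp (-(2/Real.pi^2) * s^2))
  · filter_upwards with x
    exact ((Real.continuous_exp.comp (by fun_prop)).aestronglyMeasurable).indicator
      measurableSet_Ioc
  · filter_upwards [eventually_ge_atTop (1:ℝ)] with x hx1
    filter_upwards with s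
    by_cases hs : s ∈ Set.Ioc (0:ℝ) (Real.pi * Real.sqrt x)
    · rw [Set.indicator_of_mem hs, Real.norm_eq_abs, Real.abs_exp]
      apply Real.exp_le_exp.2
      have hxpos : (0:ℝ) < x := lt_of_lt_of_le one_pos hx1
      have hsqpos : 0 < Real.sqrt x := Real.sqrt_pos.2 hxpos
      have hu2 : x * (s / Real.sqrt x)^2 = s^2 := by
        rw [div_pow, Real.sq_sqrt hxpos.le, mul_div_cancel₀ _ hxpos.ne']
      have habs : |s / Real.sqrt x| ≤ Real.pi := by
        rw [abs_div, abs_of_pos hs.1, abs_of_pos hsqpos, div_le_iff₀ hsqpos]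
        exact hs.2
      have hcb := Real.cos_le_one_sub_mul_cos_sq habs
      calc x * (Real.cos (s / Real.sqrt x) - 1)
          ≤ x * (-(2/Real.pi^2) * (s / Real.sqrt x)^2) :=
            mul_le_mul_of_nonneg_left (by linarith) hxpos.le
        _ = -(2/Real.pi^2) * (x * (s / Real.sqrt x)^2) := by ring
        _ = -(2/Real.pi^2) * s^2 := by rw [hu2]
    · rw [Set.indicator_of_notMem hs]
      simp [Real.exp_nonneg]
  · exact integrable_exp_neg_mul_sq (by positivity)
  · filter_upwards [compl_mem_ae_iff.2 (measure_singleton (0:ℝ))] with s hs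
    rcases lt_or_gt_of_ne (fun h : s = 0 => hs (by simp [h])) with hneg | hpos
    · have h1 : ∀ x : ℝ, (Set.Ioc (0:ℝ) (Real.pi * Real.sqrt x)).indicator
          (fun s => Real.exp (x * (Real.cos (s / Real.sqrt x) - 1))) s = 0 := by
        intro x
        exact Set.indicator_of_notMem (fun h => absurd h.1 (not_lt.2 hneg.le)) _
      have h2 : (Set.Ioi (0:ℝ)).indicator (fun s => Real.exp (-(s^2/2))) s = 0 :=
        Set.indicator_of_notMem (by simpa using hneg.le) _
      simp only [h1, h2]
      exact tendsto_const_nhds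
    · have h2 : (Set.Ioi (0:ℝ)).indicator (fun s => Real.exp (-(s^2/2))) s
          = Real.exp (-(s^2/2)) := Set.indicator_of_mem hpos _
      rw [h2]
      have hlim : Tendsto (fun x : ℝ => Real.exp (x * (Real.cos (s / Real.sqrt x) - 1)))
          atTop (nhds (Real.exp (-(s^2/2)))) :=
        (Real.continuous_exp.tendsto _).comp (lim_pt s)
      apply hlim.congr'
      filter_upwards [eventually_ge_atTop ((s/Real.pi)^2)] with x hx
      have hle : s ≤ Real.pi * Real.sqrt x := by
        have h4 := Real.sqrt_le_sqrt hx
        rw [Real.sqrt_sq_eq_abs, abs_div, abs_of_pos hpos, abs_of_pos Real.pi_pos] at h4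
        calc s = Real.pi * (s / Real.pi) := by field_simp
          _ ≤ Real.pi * Real.sqrt x := mul_le_mul_of_nonneg_left h4 Real.pi_pos.le
      have hmem : s ∈ Set.Ioc (0:ℝ) (Real.pi * Real.sqrt x) := ⟨hpos, hle⟩
      exact (Set.indicator_of_mem hmem (fun r => Real.exp (x * (Real.cos (r / Real.sqrt x) - 1)))).symm


/-- The asymptotic behavior recovered -/
theorem besselI0_asymptotic :
    Filter.Tendsto (fun x : ℝ => Real.sqrt (2 * Real.pi * x) * Real.exp (-x) * besselI0 x)
      Filter.atTop (nhds 1) := by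
  have key := integral_tendsto_aux.const_mul (Real.sqrt (2 * Real.pi) / Real.pi)
  have hval : Real.sqrt (2 * Real.pi) / Real.pi * (Real.sqrt (2 * Real.pi) / 2) = 1 := by
    rw [div_mul_div_comm, Real.mul_self_sqrt (by positivity)]
    field_simp
  rw [hval] at key
  apply key.congr'
  filter_upwards [eventually_gt_atTop (0:ℝ)] with x hx
  have hsqpos : 0 < Real.sqrt x := Real.sqrt_pos.2 hx
  have hsne : Real.sqrt x ≠ 0 := hsqpos.ne'
  -- step 1: indicator integral = interval integral
  have step1 : (∫ s : ℝ, (Set.Ioc (0:ℝ) (Real.pi * Real.sqrt x)).indicator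
      (fun s => Real.exp (x * (Real.cos (s / Real.sqrt x) - 1))) s)
      = ∫ s in (0:ℝ)..(Real.pi * Real.sqrt x),
          Real.exp (x * (Real.cos (s / Real.sqrt x) - 1)) := by
    rw [MeasureTheory.integral_indicator measurableSet_Ioc,
      intervalIntegral.integral_of_le (by positivity)]
  -- step 2 : change of variables
  have step2 : (∫ s in (0:ℝ)..(Real.pi * Real.sqrt x),
      Real.exp (x * (Real.cos (s / Real.sqrt x) - 1)))
      = Real.sqrt x * ∫ t in (0:ℝ)..Real.pi, Real.exp (x * (Real.cos t - 1)) := by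
    have := intervalIntegral.integral_comp_div
      (f := fun t => Real.exp (x * (Real.cos t - 1))) (a := 0)
      (b := Real.pi * Real.sqrt x) hsne
    rw [this, zero_div, mul_div_assoc, div_self hsne, mul_one, smul_eq_mul]
  -- step 3 : pull exp(-x) inside
  have step3 : Real.exp (-x) * (∫ t in (0:ℝ)..Real.pi, Real.exp (x * Real.cos t))
      = ∫ t in (0:ℝ)..Real.pi, Real.exp (x * (Real.cos t - 1)) := by
    rw [← intervalIntegral.integral_const_mul]
    apply intervalIntegral.integral_congr
    intro t _
    show Real.exp (-x) * Real.exp (x * Real.cos t) = Real.exp (x * (Real.cos t - 1))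
    rw [← Real.exp_add]
    ring_nf
  rw [step1, step2]
  unfold besselI0
  rw [Real.sqrt_mul (by positivity) x]
  rw [show Real.sqrt (2 * Real.pi) * Real.sqrt x * Real.exp (-x) *
      ((1 / Real.pi) * ∫ t in (0:ℝ)..Real.pi, Real.exp (x * Real.cos t))
      = Real.sqrt (2 * Real.pi) / Real.pi * (Real.sqrt x *
        (Real.exp (-x) * ∫ t in (0:ℝ)..Real.pi, Real.exp (x * Real.cos t))) by ring]
  rw [step3]
end
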